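/- arXiv:1401.6610 — 5 statements merged into one kernel-verified Lean document; each statement's English description precedes it below -/
import Mathlib

section
/- Let λ₁, λ₂, λ₃, λ₄ ∈ ℂ² and λ̃₁, λ̃₂, λ̃₃, λ̃₄ ∈ ℂ² satisfy momentum conservation: the 2×2 matrix λ₁λ̃₁ᵀ + λ₂λ̃₂ᵀ + λ₃λ̃₃ᵀ + λ₄λ̃₄ᵀ is zero. Define the Mandelstam invariants s₂₃ = ⟨λ₂λ₃⟩[λ̃₂λ̃₃] and s₂₄ = ⟨λ₂λ₄⟩[λ̃₂λ̃₄]. Then s₂₃ · ⟨λ₂λ₄⟩ ⟨λ₃λ₁⟩ = −s₂₄ · ⟨λ₂λ₃⟩ ⟨λ₄λ₁⟩. Consequently, if moreover all the brackets ⟨λ₁λ₂⟩, ⟨λ₂λ₃⟩, ⟨λ₃λ₄⟩, ⟨λ₄λ₁⟩, ⟨λ₂λ₄⟩, ⟨λ₄λ₃⟩, ⟨λ₃λ₁⟩ and [λ̃₂λ̃₄] are nonzero, then the four-point permutation relation holds: 1/(⟨λ₁λ₂⟩⟨λ₂λ₄⟩⟨λ₄λ₃⟩⟨λ₃λ₁⟩)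 = (s₂₃/s₂₄) · 1/(⟨λ₁λ₂⟩⟨λ₂λ₃⟩⟨λ₃λ₄⟩⟨λ₄λ₁⟩). -/
/-- Angle bracket of two spinors: determinant of the 2×2 matrix with columns `l`, `m`. -/
noncomputable def brk (l m : Fin 2 → ℂ) : ℂ := l 0 * m 1 - l 1 * m 0

/-!
Contracting momentum conservation `∑ₖ λₖ λ̃ₖᵀ = 0` with a spinor `a` on the left and a conjugate
spinor `b` on the right gives `∑ₖ ⟨a λₖ⟩[λ̃ₖ b] = 0`. For `a = λ₁`, `b = λ̃₂` the terms `k = 1, 2`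
vanish by antisymmetry, leaving `⟨13⟩[32] + ⟨14⟩[42] = 0`; multiplying by `⟨23⟩⟨24⟩` is the
Mandelstam relation, and cross-multiplying the permutation relation reduces to it.
-/

theorem brk_self (l : Fin 2 → ℂ) : brk l l = 0 := by
  rw [brk, mul_comm, sub_self]

theorem brk_swap (l m : Fin 2 → ℂ) : brk l m = -brk m l := by
  simp only [brk]
  ring

theorem sum_brk_mul_brk_eq_zero {ι : Type*} [Fintype ι] {l lt : ι → Fin 2 → ℂ}
    (hmom : ∀ i j : Fin 2, ∑ k, l k i * lt k j = 0) (a b : Fin 2 → ℂ) :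
    ∑ k, brk a (l k) * brk (lt k) b = 0 := by
  have hexpand : ∀ k, brk a (l k) * brk (lt k) b =
      a 0 * b 1 * (l k 1 * lt k 0) - a 0 * b 0 * (l k 1 * lt k 1)
        - a 1 * b 1 * (l k 0 * lt k 0) + a 1 * b 0 * (l k 0 * lt k 1) := by
    intro k
    simp only [brk]
    ring
  simp only [hexpand, Finset.sum_add_distrib, Finset.sum_sub_distrib, ← Finset.mul_sum, hmom,
    mul_zero, sub_zero, add_zero]

section FourPoint

variable {l1 l2 l3 l4 lt1 lt2 lt3 lt4 : Fin 2 → ℂ}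

theorem brk_sum_four_eq_zero
    (hmom : ∀ i j : Fin 2,
      l1 i * lt1 j + l2 i * lt2 j + l3 i * lt3 j + l4 i * lt4 j = 0) (a b : Fin 2 → ℂ) :
    brk a l1 * brk lt1 b + brk a l2 * brk lt2 b + brk a l3 * brk lt3 b
      + brk a l4 * brk lt4 b = 0 := by
  have h := sum_brk_mul_brk_eq_zero (l := ![l1, l2, l3, l4]) (lt := ![lt1, lt2, lt3, lt4])
    (by simpa [Fin.sum_univ_four] using hmom) a b
  simpa [Fin.sum_univ_four] using h

theorem mandelstam_relation
    (hmom : ∀ i j : Fin 2,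
      l1 i * lt1 j + l2 i * lt2 j + l3 i * lt3 j + l4 i * lt4 j = 0) :
    (brk l2 l3 * brk lt2 lt3) * (brk l2 l4 * brk l3 l1) =
      -((brk l2 l4 * brk lt2 lt4) * (brk l2 l3 * brk l4 l1)) := by
  have h := brk_sum_four_eq_zero hmom l1 lt2
  simp only [brk_self, zero_mul, mul_zero, zero_add] at h
  rw [brk_swap l3 l1, brk_swap lt2 lt3, brk_swap l4 l1, brk_swap lt2 lt4]
  linear_combination (brk l2 l3 * brk l2 l4) * h

theorem permutation_relation_of_mandelstam_relation
    (hrel : (brk l2 l3 * brk lt2 lt3) * (brk l2 l4 * brk l3 l1) =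
      -((brk l2 l4 * brk lt2 lt4) * (brk l2 l3 * brk l4 l1)))
    (h12 : brk l1 l2 ≠ 0) (h23 : brk l2 l3 ≠ 0) (h34 : brk l3 l4 ≠ 0) (h41 : brk l4 l1 ≠ 0)
    (h24 : brk l2 l4 ≠ 0) (h43 : brk l4 l3 ≠ 0) (h31 : brk l3 l1 ≠ 0)
    (ht24 : brk lt2 lt4 ≠ 0) :
    1 / (brk l1 l2 * brk l2 l4 * brk l4 l3 * brk l3 l1) =
      (brk l2 l3 * brk lt2 lt3) / (brk l2 l4 * brk lt2 lt4) *
        (1 / (brk l1 l2 * brk l2 l3 * brk l3 l4 * brk l4 l1)) := by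
  rw [div_mul_div_comm, mul_one, div_eq_div_iff (by simp [*]) (by simp [*]), brk_swap l4 l3]
  linear_combination (brk l1 l2 * brk l3 l4) * hrel

end FourPoint

/-- Four-point momentum conservation implies
`s₂₃ ⟨24⟩⟨31⟩ = −s₂₄ ⟨23⟩⟨41⟩`, and hence (given the stated nonvanishing brackets)
the four-point permutation relation between Parke–Taylor denominators. -/
theorem four_point_permutation_relation
    (l1 l2 l3 l4 lt1 lt2 lt3 lt4 : Fin 2 → ℂ)
    (hmom : ∀ i j : Fin 2,
      l1 i * lt1 j + l2 i * lt2 j + l3 i * lt3 j + l4 i * lt4 j = 0) :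
    (brk l2 l3 * brk lt2 lt3) * (brk l2 l4 * brk l3 l1) =
      -((brk l2 l4 * brk lt2 lt4) * (brk l2 l3 * brk l4 l1)) ∧
    (brk l1 l2 ≠ 0 → brk l2 l3 ≠ 0 → brk l3 l4 ≠ 0 → brk l4 l1 ≠ 0 →
      brk l2 l4 ≠ 0 → brk l4 l3 ≠ 0 → brk l3 l1 ≠ 0 → brk lt2 lt4 ≠ 0 →
      1 / (brk l1 l2 * brk l2 l4 * brk l4 l3 * brk l3 l1) =
        (brk l2 l3 * brk lt2 lt3) / (brk l2 l4 * brk lt2 lt4) *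
          (1 / (brk l1 l2 * brk l2 l3 * brk l3 l4 * brk l4 l1))) :=
  ⟨mandelstam_relation hmom, permutation_relation_of_mandelstam_relation (mandelstam_relation hmom)⟩
end

section
/- Let A, B, Zᵢ, Z_{i+1}, Z_{i+2}, Z_{j−1}, Z_j, Z_{j+1} ∈ ℂ⁴ satisfy the unitarity-cut conditions ⟨A B Zᵢ Z_{i+1}⟩ = 0 and ⟨A B Z_j Z_{j+1}⟩ = 0. Then ⟨Zᵢ Z_{i+1} Z_j Z_{j+1}⟩ · ⟨A B Z_{i+1} Z_{i+2}⟩ · ⟨A B Z_{j−1} Z_j⟩ = ⟨A B Z_{i+1} Z_j⟩ · ⟨A B (Zᵢ Z_{i+1} Z_{i+2})∩(Z_{j−1} Z_j Z_{j+1})⟩. -/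
/-!
On the cut the line `AB` meets both lines `(Zᵢ Zᵢ₊₁)` and `(Zⱼ Zⱼ₊₁)`. The first term of the
intersection bracket vanishes, and the Plücker relation for `AB`, together with
`⟨A B Zᵢ Zᵢ₊₁⟩ = 0`, turns `⟨A B Zᵢ₊₁ Zⱼ⟩⟨A B Zᵢ₊₂ Zᵢ⟩` into `⟨A B Zᵢ₊₁ Zᵢ₊₂⟩⟨A B Zⱼ Zᵢ⟩`, so both
sides carry the factor `⟨A B Zᵢ₊₁ Zᵢ₊₂⟩`. What remains is the five-term (Cramer) identity for
`Zᵢ, Zᵢ₊₁, Zⱼ₋₁, Zⱼ, Zⱼ₊₁` contracted with `⟨A B · Zⱼ⟩`, whose term in `⟨A B Zⱼ Zⱼ₊₁⟩`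
vanishes on the second cut.
-/

/-- Four-bracket: determinant of the 4×4 matrix whose columns are `a b c d`. -/
noncomputable def brk4 (a b c d : Fin 4 → ℂ) : ℂ :=
  Matrix.det (Matrix.of fun i j => ![a, b, c, d] j i)

/-- `⟨X Y (p q r)∩(s t u)⟩`: contraction of `X∧Y` with the bivector
representing the intersection line of the planes `(p q r)` and `(s t u)`. -/
noncomputable def interBrk (X Y p q r s t u : Fin 4 → ℂ) : ℂ :=
  brk4 X Y p q * brk4 r s t u + brk4 X Y q r * brk4 p s t u +
    brk4 X Y r p * brk4 q s t u

lemma brk4_eq (a b c d : Fin 4 → ℂ) : brk4 a b c d =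
    a 0 * (b 1 * (c 2 * d 3 - c 3 * d 2) - b 2 * (c 1 * d 3 - c 3 * d 1) + b 3 * (c 1 * d 2 - c 2 * d 1))
  - b 0 * (a 1 * (c 2 * d 3 - c 3 * d 2) - a 2 * (c 1 * d 3 - c 3 * d 1) + a 3 * (c 1 * d 2 - c 2 * d 1))
  + c 0 * (a 1 * (b 2 * d 3 - b 3 * d 2) - a 2 * (b 1 * d 3 - b 3 * d 1) + a 3 * (b 1 * d 2 - b 2 * d 1))
  - d 0 * (a 1 * (b 2 * c 3 - b 3 * c 2) - a 2 * (b 1 * c 3 - b 3 * c 1) + a 3 * (b 1 * c 2 - b 2 * c 1)) := by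
  rw [brk4, Matrix.det_succ_row_zero]
  simp only [Fin.sum_univ_four, Matrix.det_fin_three]
  simp [Fin.succAbove]
  ring

lemma brk4_swap_right (a b c d : Fin 4 → ℂ) : brk4 a b c d = -brk4 a b d c := by
  rw [brk4_eq, brk4_eq]; ring

lemma brk4_self_right (a b c : Fin 4 → ℂ) : brk4 a b c c = 0 := by
  rw [brk4_eq]; ring

lemma brk4_pluecker (A B c d e f : Fin 4 → ℂ) :
    brk4 A B c d * brk4 A B e f = brk4 A B c e * brk4 A B d f - brk4 A B c f * brk4 A B d e := by
  simp only [brk4_eq]; ring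

/-- Cramer's rule `∑ₖ (-1)ᵏ ⟨v₀ … v̂ₖ … v₄⟩ vₖ = 0` for five vectors in `ℂ⁴`, contracted with the
functional `⟨A B · e⟩`. -/
lemma brk4_five_term (A B e v₀ v₁ v₂ v₃ v₄ : Fin 4 → ℂ) :
    brk4 v₁ v₂ v₃ v₄ * brk4 A B v₀ e - brk4 v₀ v₂ v₃ v₄ * brk4 A B v₁ e
      + brk4 v₀ v₁ v₃ v₄ * brk4 A B v₂ e - brk4 v₀ v₁ v₂ v₄ * brk4 A B v₃ e
      + brk4 v₀ v₁ v₂ v₃ * brk4 A B v₄ e = 0 := by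
  simp only [brk4_eq]; ring

/-- Under the unitarity-cut conditions, the unphysical pole `⟨A B i+1 j⟩`
converts into the intersection numerator `⟨A B (i i+1 i+2)∩(j−1 j j+1)⟩`. -/
theorem unphysical_pole_intersection_form (A B Zi Zi1 Zi2 Zjm Zj Zj1 : Fin 4 → ℂ)
    (hcut1 : brk4 A B Zi Zi1 = 0) (hcut2 : brk4 A B Zj Zj1 = 0) :
    brk4 Zi Zi1 Zj Zj1 * brk4 A B Zi1 Zi2 * brk4 A B Zjm Zj =
      brk4 A B Zi1 Zj * interBrk A B Zi Zi1 Zi2 Zjm Zj Zj1 := by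
  have hplucker : brk4 A B Zi1 Zj * brk4 A B Zi2 Zi = -brk4 A B Zi1 Zi2 * brk4 A B Zi Zj := by
    rw [brk4_pluecker, brk4_swap_right A B Zi1 Zi, brk4_swap_right A B Zj Zi, hcut1]; ring
  have hcramer := brk4_five_term A B Zj Zi Zi1 Zjm Zj Zj1
  rw [brk4_self_right, brk4_swap_right A B Zj1 Zj, hcut2] at hcramer
  unfold interBrk
  rw [hcut1]
  linear_combination (-brk4 Zi1 Zjm Zj Zj1) * hplucker + brk4 A B Zi1 Zi2 * hcramer
end

section
/- Let A, B, Z_{i−1}, Zᵢ, Z_{i+1}, Z_{j−1}, Z_j, Z_{j+1} ∈ ℂ⁴ satisfy the unitarity-cut conditions ⟨A B Zᵢ Z_{i+1}⟩ = 0 and ⟨A B Z_j Z_{j+1}⟩ = 0. Then ⟨Zᵢ Z_{i+1} Z_j Z_{j+1}⟩ · ⟨A B Z_{i−1} Zᵢ⟩ · ⟨A B Z_{j−1} Z_j⟩ = −⟨A B Zᵢ Z_j⟩ · ⟨A B (Z_{i−1} Zᵢ Z_{i+1})∩(Z_{j−1} Z_j Z_{j+1})⟩. -/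
open Matrix

lemma brk4_eq_det (a b c d : Fin 4 → ℂ) : brk4 a b c d = (of ![a, b, c, d]).det := by
  rw [brk4, ← det_transpose]; rfl

lemma brk4_eq_detRowAlternating (a b c d : Fin 4 → ℂ) :
    brk4 a b c d = detRowAlternating ![a, b, c, d] := by
  rw [brk4_eq_det]; unfold det; rfl

section Alternating

variable (a b c d : Fin 4 → ℂ)

lemma brk4_swap_12 : brk4 b a c d = -brk4 a b c d := by
  simp only [brk4_eq_detRowAlternating]
  rw [← AlternatingMap.map_swap _ _ (show (0 : Fin 4) ≠ 1 by decide)]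
  congr 1; funext k; fin_cases k <;> rfl

lemma brk4_swap_23 : brk4 a c b d = -brk4 a b c d := by
  simp only [brk4_eq_detRowAlternating]
  rw [← AlternatingMap.map_swap _ _ (show (1 : Fin 4) ≠ 2 by decide)]
  congr 1; funext k; fin_cases k <;> rfl

lemma brk4_swap_34 : brk4 a b d c = -brk4 a b c d := by
  simp only [brk4_eq_detRowAlternating]
  rw [← AlternatingMap.map_swap _ _ (show (2 : Fin 4) ≠ 3 by decide)]
  congr 1; funext k; fin_cases k <;> rfl

lemma brk4_self_13 : brk4 a b a d = 0 := by
  rw [brk4_eq_detRowAlternating]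
  exact AlternatingMap.map_eq_zero_of_eq _ _ (i := 0) (j := 2) rfl (by decide)

lemma brk4_self_23 : brk4 a b b d = 0 := by
  rw [brk4_eq_detRowAlternating]
  exact AlternatingMap.map_eq_zero_of_eq _ _ (i := 1) (j := 2) rfl (by decide)

lemma brk4_self_34 : brk4 a b c c = 0 := by
  rw [brk4_eq_detRowAlternating]
  exact AlternatingMap.map_eq_zero_of_eq _ _ (i := 2) (j := 3) rfl (by decide)

end Alternating

noncomputable def brk4Third (X Y W : Fin 4 → ℂ) : (Fin 4 → ℂ) →ₗ[ℂ] ℂ :=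
  (detRowAlternating : (Fin 4 → ℂ) [⋀^Fin 4]→ₗ[ℂ] ℂ).toMultilinearMap.toLinearMap ![X, Y, 0, W] 2

lemma brk4Third_apply (X Y W x : Fin 4 → ℂ) : brk4Third X Y W x = brk4 X Y x W := by
  rw [brk4Third, MultilinearMap.toLinearMap_apply, brk4_eq_detRowAlternating]
  show detRowAlternating _ = _
  congr 1; funext k; fin_cases k <;> rfl

lemma brk4_cramer (a b c d e : Fin 4 → ℂ) :
    brk4 e b c d • a + brk4 a e c d • b + brk4 a b e d • c + brk4 a b c e • d =
      brk4 a b c d • e := by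
  have h := mulVec_cramer (of ![a, b, c, d])ᵀ e
  rw [mulVec_eq_sum, Fin.sum_univ_four, det_transpose] at h
  simp only [cramer_transpose_apply, op_smul_eq_smul, transpose_transpose] at h
  simp only [brk4_eq_det]
  convert h using 3 <;> congr <;> ext i j <;> fin_cases i <;> rfl

lemma brk4_cramer_map (f : (Fin 4 → ℂ) →ₗ[ℂ] ℂ) (a b c d e : Fin 4 → ℂ) :
    brk4 e b c d * f a + brk4 a e c d * f b + brk4 a b e d * f c + brk4 a b c e * f d =
      brk4 a b c d * f e := by
  simpa only [map_add, map_smul, smul_eq_mul] using congrArg f (brk4_cramer a b c d e)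

lemma brk4_plucker (X Y a b c d : Fin 4 → ℂ) :
    brk4 X Y a d * brk4 X Y c b + brk4 X Y c a * brk4 X Y d b =
      brk4 X Y c d * brk4 X Y a b := by
  simpa only [brk4Third_apply, brk4_self_13, brk4_self_23, mul_zero, zero_add] using
    brk4_cramer_map (brk4Third X Y b) X Y c d a

lemma brk4_schouten (X Y a b c d e : Fin 4 → ℂ) :
    brk4 b c e d * brk4 X Y a e - brk4 a c e d * brk4 X Y b e + brk4 a b e d * brk4 X Y c e
      + brk4 a b c e * brk4 X Y d e = 0 := by
  have h := brk4_cramer_map (brk4Third X Y e) a b c d e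
  simp only [brk4Third_apply, brk4_self_34, mul_zero] at h
  rw [brk4_swap_12 b e, brk4_swap_23 b c e, brk4_swap_23 a c e] at h
  linear_combination h

/-- Under the unitarity-cut conditions, the pole `⟨A B i j⟩` converts into the
intersection numerator `−⟨A B (i−1 i i+1)∩(j−1 j j+1)⟩`. -/
theorem pole_ij_intersection_form (A B Zim Zi Zi1 Zjm Zj Zj1 : Fin 4 → ℂ)
    (hcut1 : brk4 A B Zi Zi1 = 0) (hcut2 : brk4 A B Zj Zj1 = 0) :
    brk4 Zi Zi1 Zj Zj1 * brk4 A B Zim Zi * brk4 A B Zjm Zj =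
      -(brk4 A B Zi Zj * interBrk A B Zim Zi Zi1 Zjm Zj Zj1) := by
  have plucker := brk4_plucker A B Zi Zj Zi1 Zim
  rw [brk4_swap_34 A B Zim Zi, brk4_swap_34 A B Zi Zi1, hcut1] at plucker
  have schouten := brk4_schouten A B Zi Zi1 Zjm Zj1 Zj
  rw [brk4_swap_34 A B Zj Zj1, hcut2] at schouten
  rw [interBrk, hcut1]
  linear_combination brk4 A B Zim Zi * schouten - brk4 Zi Zjm Zj Zj1 * plucker
end

section
/- Let A, B, Zᵢ, Z_{i+1}, Z_j, Z_{j+1}, X, Y ∈ ℂ⁴ satisfy the unitarity-cut conditions ⟨A B Zᵢ Z_{i+1}⟩ = 0 and ⟨A B Z_j Z_{j+1}⟩ = 0, and assume ⟨Zᵢ Z_{i+1} Z_j Z_{j+1}⟩ ≠ 0. Then ⟨A B X Y⟩ · ⟨Zᵢ Z_{i+1} Z_j Z_{j+1}⟩ = ⟨Zᵢ Z_{j+1} X Y⟩⟨A B Z_{i+1} Z_j⟩ + ⟨Z_{i+1} Z_j X Y⟩⟨A B Zᵢ Z_{j+1}⟩ + ⟨Z_{j+1} Z_{i+1} X Y⟩⟨A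 B Zᵢ Z_j⟩ + ⟨Zᵢ Z_j X Y⟩⟨A B Z_{j+1} Z_{i+1}⟩. -/
theorem brk4_eq_cofactor_expansion (a b c d : Fin 4 → ℂ) :
    brk4 a b c d =
      a 0 * (b 1 * (c 2 * d 3 - c 3 * d 2) - b 2 * (c 1 * d 3 - c 3 * d 1)
        + b 3 * (c 1 * d 2 - c 2 * d 1))
      - a 1 * (b 0 * (c 2 * d 3 - c 3 * d 2) - b 2 * (c 0 * d 3 - c 3 * d 0)
        + b 3 * (c 0 * d 2 - c 2 * d 0))
      + a 2 * (b 0 * (c 1 * d 3 - c 3 * d 1) - b 1 * (c 0 * d 3 - c 3 * d 0)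
        + b 3 * (c 0 * d 1 - c 1 * d 0))
      - a 3 * (b 0 * (c 1 * d 2 - c 2 * d 1) - b 1 * (c 0 * d 2 - c 2 * d 0)
        + b 2 * (c 0 * d 1 - c 1 * d 0)) := by
  rw [brk4, Matrix.det_succ_column_zero]
  simp [Fin.sum_univ_succ, Matrix.det_fin_three, Fin.succAbove]
  ring

theorem brk4_mul_brk4_eq_sum_pairings (A B X Y a b c d : Fin 4 → ℂ) :
    brk4 A B X Y * brk4 a b c d =
      brk4 a b X Y * brk4 A B c d + brk4 c d X Y * brk4 A B a b +
        brk4 a d X Y * brk4 A B b c + brk4 b c X Y * brk4 A B a d +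
          brk4 d b X Y * brk4 A B a c + brk4 a c X Y * brk4 A B d b := by
  simp only [brk4_eq_cofactor_expansion]
  ring

theorem reference_propagator_expansion_general (A B Zi Zi1 Zj Zj1 X Y : Fin 4 → ℂ)
    (hcut1 : brk4 A B Zi Zi1 = 0) (hcut2 : brk4 A B Zj Zj1 = 0) :
    brk4 A B X Y * brk4 Zi Zi1 Zj Zj1 =
      brk4 Zi Zj1 X Y * brk4 A B Zi1 Zj + brk4 Zi1 Zj X Y * brk4 A B Zi Zj1 +
        brk4 Zj1 Zi1 X Y * brk4 A B Zi Zj + brk4 Zi Zj X Y * brk4 A B Zj1 Zi1 := by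
  rw [brk4_mul_brk4_eq_sum_pairings, hcut1, hcut2]
  ring

/-- Expansion of a reference propagator `⟨A B X Y⟩` in terms of the four
cut-surviving brackets, under the unitarity-cut conditions. -/
theorem reference_propagator_expansion (A B Zi Zi1 Zj Zj1 X Y : Fin 4 → ℂ)
    (hcut1 : brk4 A B Zi Zi1 = 0) (hcut2 : brk4 A B Zj Zj1 = 0)
    (hne : brk4 Zi Zi1 Zj Zj1 ≠ 0) :
    brk4 A B X Y * brk4 Zi Zi1 Zj Zj1 =
      brk4 Zi Zj1 X Y * brk4 A B Zi1 Zj + brk4 Zi1 Zj X Y * brk4 A B Zi Zj1 +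
        brk4 Zj1 Zi1 X Y * brk4 A B Zi Zj + brk4 Zi Zj X Y * brk4 A B Zj1 Zi1 :=
  reference_propagator_expansion_general A B Zi Zi1 Zj Zj1 X Y hcut1 hcut2
end

section
/- Let x and y be complex 2×2 matrices and let λᵢ, λⱼ, λₖ, λₗ ∈ ℂ². Form the momentum twistors Zᵢ = (λᵢ, x λᵢ) ∈ ℂ⁴, Zⱼ = (λⱼ, x λⱼ), Zₖ = (λₖ, y λₖ), Zₗ = (λₗ, y λₗ) (first two components the spinor, last two its image under the matrix). Then the four-bracket factorizes as ⟨Zᵢ Zⱼ Zₖ Zₗ⟩ = ⟨λᵢ λⱼ⟩ · ⟨λₖ λₗ⟩ · det(x − y). In particular, if the two lines (Zᵢ, Zⱼ) and (Zₖ, Zₗ) correspond to spacetime points x and y with det(x−y) = 0 (a null separation), the four points are coplanar and the bracket vanishes. -/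
/-- The momentum twistor `Z = (λ, x λ)` associated to a dual spacetime point
(2×2 matrix) `x` and a spinor `λ`. -/
noncomputable def twistor (x : Matrix (Fin 2) (Fin 2) ℂ) (l : Fin 2 → ℂ) :
    Fin 4 → ℂ :=
  ![l 0, l 1, x.mulVec l 0, x.mulVec l 1]

/-!
With `Λ₁ = (λᵢ λⱼ)` and `Λ₂ = (λₖ λₗ)`, the matrix of the four twistors is the block matrix
`[[Λ₁, Λ₂], [x Λ₁, y Λ₂]] = [[1, 0], [x, 1]] * [[Λ₁, Λ₂], [0, (y - x) Λ₂]]`,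
a product of two block-triangular matrices, so its determinant is `det Λ₁ * det (y - x) * det Λ₂`.
For 2×2 matrices `det (y - x) = det (x - y)`.
-/

open Matrix

theorem Matrix.det_fromBlocks_lower_mul_upper {R n : Type*} [CommRing R] [Fintype n]
    [DecidableEq n] (A B x y : Matrix n n R) :
    (fromBlocks A B (x * A) (y * B)).det = A.det * (y - x).det * B.det := by
  have hfactor : fromBlocks A B (x * A) (y * B) =
      fromBlocks 1 0 x 1 * fromBlocks A B 0 ((y - x) * B) := by
    rw [fromBlocks_multiply]
    congr 1 <;> simp [sub_mul]
  rw [hfactor, det_mul, det_fromBlocks_zero₁₂, det_fromBlocks_zero₂₁, det_one, det_mul]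
  ring

noncomputable def spinorMatrix (l m : Fin 2 → ℂ) : Matrix (Fin 2) (Fin 2) ℂ :=
  Matrix.of fun i j => ![l, m] j i

theorem det_spinorMatrix (l m : Fin 2 → ℂ) : (spinorMatrix l m).det = brk l m := by
  simp [spinorMatrix, det_fin_two, brk]
  ring

theorem brk4_twistor_eq_det_fromBlocks (x y : Matrix (Fin 2) (Fin 2) ℂ)
    (li lj lk ll : Fin 2 → ℂ) :
    brk4 (twistor x li) (twistor x lj) (twistor y lk) (twistor y ll) =
      (fromBlocks (spinorMatrix li lj) (spinorMatrix lk ll)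
        (x * spinorMatrix li lj) (y * spinorMatrix lk ll)).det := by
  rw [brk4, ← det_reindex_self (finSumFinEquiv (m := 2) (n := 2)).symm]
  congr 1
  ext (i | i) (j | j) <;> fin_cases i <;> fin_cases j <;>
    simp [twistor, spinorMatrix, mulVec, dotProduct, mul_apply, Fin.sum_univ_two, finSumFinEquiv]

/-- Factorization of the momentum-twistor four-bracket:
`⟨Zᵢ Zⱼ Zₖ Zₗ⟩ = ⟨λᵢ λⱼ⟩ ⟨λₖ λₗ⟩ det(x − y)`; in particular the bracket
vanishes when the two dual points are null separated. -/
theorem twistor_four_bracket_factorization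
    (x y : Matrix (Fin 2) (Fin 2) ℂ) (li lj lk ll : Fin 2 → ℂ) :
    brk4 (twistor x li) (twistor x lj) (twistor y lk) (twistor y ll) =
      brk li lj * brk lk ll * (x - y).det ∧
    ((x - y).det = 0 →
      brk4 (twistor x li) (twistor x lj) (twistor y lk) (twistor y ll) = 0) := by
  have hfactor : brk4 (twistor x li) (twistor x lj) (twistor y lk) (twistor y ll) =
      brk li lj * brk lk ll * (x - y).det := by
    rw [brk4_twistor_eq_det_fromBlocks, det_fromBlocks_lower_mul_upper, ← neg_sub, det_neg,
      det_spinorMatrix, det_spinorMatrix, Fintype.card_fin]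
    ring
  exact ⟨hfactor, fun hnull => by rw [hfactor, hnull, mul_zero]⟩
end
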